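/- For every rational number t with t ≠ 0, t ≠ 1 and t ≠ -1, the point R = (-t² + 1, t⁴ - 1) is a rational point on the elliptic curve Y² = (X + 2t²)(X² + t⁶ - 2t⁴ + t²), and R has infinite order in the group of rational points of this curve. -/

import Mathlib

/-!
On `y² = x³ + a₂x² + a₄x + a₆`, call `x` large at `2` if `|a₂|₂ < |x|₂`, `|a₄|₂ < |x|₂²` and
`|a₆|₂ < |x|₂³`. Then `|y|₂² = |x|₂³`, the tangent slope `ℓ = (3x² + 2a₂x + a₄)/(2y)`
has `|ℓ|₂² = 4|x|₂`, and so doubling multiplies `|x|₂` by `4` and stays in this region.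
A point with large `x` therefore has pairwise distinct multiples `2ᵏ • P`, hence infinite order.
The double `2R` has `x = (t⁴ - 6t² + 1)/4`, which is large at `2` whatever the size of `|t|₂`.
-/

/-- The elliptic curve `Y² = (X + 2t²)(X² + t⁶ - 2t⁴ + t²)` as a Weierstrass curve:
expanding gives `Y² = X³ + 2t²X² + (t⁶ - 2t⁴ + t²)X + 2t²(t⁶ - 2t⁴ + t²)`. -/
noncomputable def curveT (t : ℚ) : WeierstrassCurve.Affine ℚ :=
  { a₁ := 0, a₂ := 2 * t ^ 2, a₃ := 0,
    a₄ := t ^ 6 - 2 * t ^ 4 + t ^ 2,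
    a₆ := 2 * t ^ 2 * (t ^ 6 - 2 * t ^ 4 + t ^ 2) }

namespace padicNorm

variable {p : ℕ} [Fact p.Prime]

protected lemma pow (q : ℚ) (n : ℕ) : padicNorm p (q ^ n) = padicNorm p q ^ n :=
  IsAbsoluteValue.abv_pow (padicNorm p) q n

lemma add_eq_left_of_lt {q r : ℚ} (h : padicNorm p r < padicNorm p q) :
    padicNorm p (q + r) = padicNorm p q := by
  rw [add_eq_max_of_ne h.ne', max_eq_left h.le]

lemma add_lt_of_lt_of_lt {q r M : ℚ} (hq : padicNorm p q < M) (hr : padicNorm p r < M) :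
    padicNorm p (q + r) < M :=
  padicNorm.nonarchimedean.trans_lt (max_lt hq hr)

end padicNorm

lemma padicNorm_two_two : padicNorm 2 2 = 1 / 2 := by
  simpa using padicNorm.padicNorm_p_of_prime (p := 2)

lemma padicNorm_two_three : padicNorm 2 3 = 1 := by
  simpa using (padicNorm.nat_eq_one_iff (p := 2) 3).2 (by decide)

lemma padicNorm_two_sub_one_le_half {t : ℚ} (ht : padicNorm 2 t = 1) :
    padicNorm 2 (t - 1) ≤ 1 / 2 := by
  have hsplit : padicNorm 2 t = padicNorm 2 t.num / padicNorm 2 t.den := by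
    rw [← padicNorm.div, Rat.num_div_den]
  have hden : ¬ 2 ∣ t.den := by
    intro h2den
    have hnum : ¬ (2 : ℤ) ∣ t.num := fun h2num =>
      absurd (Nat.eq_one_of_dvd_coprimes t.reduced (Int.natAbs_dvd_natAbs.2 h2num) h2den)
        (by norm_num)
    rw [hsplit, (padicNorm.int_eq_one_iff _).2 (by exact_mod_cast hnum), one_div,
      inv_eq_one] at ht
    exact ((padicNorm.nat_lt_one_iff t.den).2 h2den).ne ht
  have hden1 := (padicNorm.nat_eq_one_iff t.den).2 hden
  have hnum : ¬ (2 : ℤ) ∣ t.num := by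
    have := (padicNorm.int_eq_one_iff (p := 2) t.num).1 (by rwa [hsplit, hden1, div_one] at ht)
    exact_mod_cast this
  have hdiff : ((2 ^ 1 : ℕ) : ℤ) ∣ t.num - t.den := by push_cast; omega
  have hdiv : t - 1 = ((t.num - t.den : ℤ) : ℚ) / t.den := by
    rw [Int.cast_sub, sub_div, Int.cast_natCast, div_self (by positivity), Rat.num_div_den]
  rw [hdiv, padicNorm.div, hden1, div_one]
  simpa using padicNorm.dvd_iff_norm_le.1 hdiff

lemma padicNorm_two_sq_sub_one_le {t : ℚ} (ht : padicNorm 2 t = 1) :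
    padicNorm 2 (t ^ 2 - 1) ≤ 1 / 4 := by
  have hsub := padicNorm_two_sub_one_le_half ht
  have hadd : padicNorm 2 (t + 1) ≤ 1 / 2 := by
    rw [show t + 1 = (t - 1) + 2 by ring]
    exact padicNorm.nonarchimedean.trans (max_le hsub padicNorm_two_two.le)
  rw [show t ^ 2 - 1 = (t - 1) * (t + 1) by ring, padicNorm.mul]
  nlinarith [padicNorm.nonneg (p := 2) (t - 1), padicNorm.nonneg (p := 2) (t + 1)]

lemma padicNorm_two_six_mul_sq (t : ℚ) : padicNorm 2 (6 * t ^ 2) = padicNorm 2 t ^ 2 / 2 := by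
  rw [show (6 : ℚ) = 2 * 3 by norm_num, padicNorm.mul, padicNorm.mul, padicNorm_two_two,
    padicNorm_two_three, padicNorm.pow]
  ring

lemma padicNorm_two_quartic_of_lt_one {t : ℚ} (ht : padicNorm 2 t < 1) :
    padicNorm 2 (t ^ 4 - 6 * t ^ 2 + 1) = 1 ∧ padicNorm 2 (t ^ 2 - 1) = 1 := by
  have hn := padicNorm.nonneg (p := 2) t
  have ht2 : padicNorm 2 (t ^ 2) < 1 := by
    rw [padicNorm.pow]
    nlinarith
  have ht4 : padicNorm 2 (t ^ 4) < 1 := by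
    rw [padicNorm.pow]
    exact pow_lt_one₀ hn ht (by norm_num)
  have h6 : padicNorm 2 (-(6 * t ^ 2)) < 1 := by
    rw [padicNorm.neg, padicNorm_two_six_mul_sq]; nlinarith
  constructor
  · rw [show t ^ 4 - 6 * t ^ 2 + 1 = 1 + (t ^ 4 + -(6 * t ^ 2)) by ring,
      padicNorm.add_eq_left_of_lt
        (by rw [padicNorm.one]; exact padicNorm.add_lt_of_lt_of_lt ht4 h6),
      padicNorm.one]
  · rw [sub_eq_neg_add, padicNorm.add_eq_left_of_lt (by rwa [padicNorm.neg, padicNorm.one]),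
      padicNorm.neg, padicNorm.one]

lemma padicNorm_two_quartic_of_one_lt {t : ℚ} (ht : 1 < padicNorm 2 t) :
    padicNorm 2 (t ^ 4 - 6 * t ^ 2 + 1) = padicNorm 2 t ^ 4 ∧
      padicNorm 2 (t ^ 2 - 1) = padicNorm 2 t ^ 2 := by
  have h2 : 1 < padicNorm 2 t ^ 2 := one_lt_pow₀ ht two_ne_zero
  have h4 : padicNorm 2 t ^ 2 < padicNorm 2 t ^ 4 := pow_lt_pow_right₀ ht (by norm_num)
  have h6 : padicNorm 2 (-(6 * t ^ 2)) < padicNorm 2 t ^ 4 := by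
    rw [padicNorm.neg, padicNorm_two_six_mul_sq]; linarith
  constructor
  · rw [show t ^ 4 - 6 * t ^ 2 + 1 = t ^ 4 + (-(6 * t ^ 2) + 1) by ring,
      padicNorm.add_eq_left_of_lt (by
        rw [padicNorm.pow]
        exact padicNorm.add_lt_of_lt_of_lt h6 (by rw [padicNorm.one]; linarith)),
      padicNorm.pow]
  · rw [sub_eq_add_neg,
      padicNorm.add_eq_left_of_lt (by rwa [padicNorm.neg, padicNorm.one, padicNorm.pow]),
      padicNorm.pow]

lemma padicNorm_two_quartic_of_eq_one {t : ℚ} (ht : padicNorm 2 t = 1) :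
    padicNorm 2 (t ^ 4 - 6 * t ^ 2 + 1) = 1 / 4 := by
  have hs := padicNorm_two_sq_sub_one_le ht
  have h4 : padicNorm 2 (-(2 * 2 * t ^ 2)) = 1 / 4 := by
    rw [padicNorm.neg, padicNorm.mul, padicNorm.mul, padicNorm_two_two, padicNorm.pow, ht]
    norm_num
  -- `t² ≡ 1` modulo `4`, so the quartic is `-4t²` up to a smaller term
  rw [show t ^ 4 - 6 * t ^ 2 + 1 = -(2 * 2 * t ^ 2) + (t ^ 2 - 1) ^ 2 by ring,
    padicNorm.add_eq_left_of_lt (by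
      rw [h4, padicNorm.pow]
      nlinarith [padicNorm.nonneg (p := 2) (t ^ 2 - 1)]), h4]

namespace WeierstrassCurve.Affine

variable {W : Affine ℚ} {x y : ℚ}

def IsLargeAtTwo (W : Affine ℚ) (x : ℚ) : Prop :=
  padicNorm 2 W.a₂ < padicNorm 2 x ∧ padicNorm 2 W.a₄ < padicNorm 2 x ^ 2 ∧
    padicNorm 2 W.a₆ < padicNorm 2 x ^ 3

lemma IsLargeAtTwo.padicNorm_pos (hx : W.IsLargeAtTwo x) : 0 < padicNorm 2 x :=
  (padicNorm.nonneg _).trans_lt hx.1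

lemma IsLargeAtTwo.mono {x' : ℚ} (hx : W.IsLargeAtTwo x)
    (hle : padicNorm 2 x ≤ padicNorm 2 x') : W.IsLargeAtTwo x' :=
  ⟨hx.1.trans_le hle, hx.2.1.trans_le (by gcongr; exact padicNorm.nonneg _),
    hx.2.2.trans_le (by gcongr; exact padicNorm.nonneg _)⟩

lemma isLargeAtTwo_of_a₆_eq_mul (h₆ : W.a₆ = W.a₂ * W.a₄)
    (h₂ : padicNorm 2 W.a₂ < padicNorm 2 x) (h₄ : padicNorm 2 W.a₄ < padicNorm 2 x ^ 2) :
    W.IsLargeAtTwo x := by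
  refine ⟨h₂, h₄, ?_⟩
  rw [h₆, padicNorm.mul, pow_succ']
  exact mul_lt_mul'' h₂ h₄ (padicNorm.nonneg _) (padicNorm.nonneg _)

lemma Y_ne_negY_of_a₁_a₃ (ha₁ : W.a₁ = 0) (ha₃ : W.a₃ = 0) (hy : y ≠ 0) : y ≠ W.negY x y := by
  rw [negY, ha₁, ha₃]
  intro h
  exact hy (by linarith)

lemma addX_self_of_a₁_a₃ (ha₁ : W.a₁ = 0) (ha₃ : W.a₃ = 0) (hy : y ≠ 0) :
    W.addX x x (W.slope x x y y) =
      ((3 * x ^ 2 + 2 * W.a₂ * x + W.a₄) / (2 * y)) ^ 2 - W.a₂ - 2 * x := by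
  rw [slope_of_Y_ne rfl (Y_ne_negY_of_a₁_a₃ ha₁ ha₃ hy), addX, negY, ha₁, ha₃]
  ring

lemma IsLargeAtTwo.padicNorm_sq_Y (ha₁ : W.a₁ = 0) (ha₃ : W.a₃ = 0)
    (h : W.Equation x y) (hx : W.IsLargeAtTwo x) :
    padicNorm 2 y ^ 2 = padicNorm 2 x ^ 3 := by
  have hpos := hx.padicNorm_pos
  have hy : y ^ 2 = x ^ 3 + (W.a₂ * x ^ 2 + W.a₄ * x + W.a₆) := by
    have := (equation_iff x y).1 h
    rw [ha₁, ha₃] at this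
    linear_combination this
  have hrest : padicNorm 2 (W.a₂ * x ^ 2 + W.a₄ * x + W.a₆) < padicNorm 2 (x ^ 3) := by
    rw [padicNorm.pow]
    refine padicNorm.add_lt_of_lt_of_lt (padicNorm.add_lt_of_lt_of_lt ?_ ?_) hx.2.2
    · rw [padicNorm.mul, padicNorm.pow]
      exact (mul_lt_mul_of_pos_right hx.1 (pow_pos hpos 2)).trans_eq (by ring)
    · rw [padicNorm.mul]
      exact (mul_lt_mul_of_pos_right hx.2.1 hpos).trans_eq (by ring)
  rw [← padicNorm.pow, hy, padicNorm.add_eq_left_of_lt hrest, padicNorm.pow]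

lemma IsLargeAtTwo.Y_ne_zero (ha₁ : W.a₁ = 0) (ha₃ : W.a₃ = 0)
    (h : W.Equation x y) (hx : W.IsLargeAtTwo x) : y ≠ 0 := by
  rintro rfl
  have hy2 := hx.padicNorm_sq_Y ha₁ ha₃ h
  rw [padicNorm.zero, zero_pow two_ne_zero] at hy2
  exact (pow_pos hx.padicNorm_pos 3).ne' hy2.symm

lemma IsLargeAtTwo.padicNorm_addX_self (ha₁ : W.a₁ = 0) (ha₃ : W.a₃ = 0)
    (h : W.Equation x y) (hx : W.IsLargeAtTwo x) :
    padicNorm 2 (W.addX x x (W.slope x x y y)) = 4 * padicNorm 2 x := by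
  have hpos := hx.padicNorm_pos
  have hnum : padicNorm 2 (3 * x ^ 2 + 2 * W.a₂ * x + W.a₄) = padicNorm 2 x ^ 2 := by
    have h3 : padicNorm 2 (3 * x ^ 2) = padicNorm 2 x ^ 2 := by
      rw [padicNorm.mul, padicNorm_two_three, padicNorm.pow, one_mul]
    have hlin : padicNorm 2 (2 * W.a₂ * x) < padicNorm 2 x ^ 2 := by
      rw [padicNorm.mul, padicNorm.mul, padicNorm_two_two]
      nlinarith [hx.1]
    rw [add_assoc, padicNorm.add_eq_left_of_lt (by
      rw [h3]; exact padicNorm.add_lt_of_lt_of_lt hlin hx.2.1), h3]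
  have hslope : padicNorm 2 (((3 * x ^ 2 + 2 * W.a₂ * x + W.a₄) / (2 * y)) ^ 2) =
      4 * padicNorm 2 x := by
    rw [padicNorm.pow, padicNorm.div, padicNorm.mul, padicNorm_two_two, div_pow, hnum, mul_pow,
      hx.padicNorm_sq_Y ha₁ ha₃ h]
    field_simp
    ring
  have hrest : padicNorm 2 (-(W.a₂ + 2 * x)) < 4 * padicNorm 2 x := by
    rw [padicNorm.neg]
    refine padicNorm.add_lt_of_lt_of_lt (by linarith [hx.1]) ?_
    rw [padicNorm.mul, padicNorm_two_two]
    linarith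
  rw [addX_self_of_a₁_a₃ ha₁ ha₃ (hx.Y_ne_zero ha₁ ha₃ h), sub_sub, sub_eq_add_neg,
    padicNorm.add_eq_left_of_lt (by rwa [hslope]), hslope]

lemma IsLargeAtTwo.exists_two_nsmul (ha₁ : W.a₁ = 0) (ha₃ : W.a₃ = 0)
    (h : W.Nonsingular x y) (hx : W.IsLargeAtTwo x) :
    ∃ (x' y' : ℚ) (h' : W.Nonsingular x' y'),
      2 • Point.some _ _ h = Point.some _ _ h' ∧ padicNorm 2 x' = 4 * padicNorm 2 x :=
  ⟨_, _, _, by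
    rw [two_nsmul, Point.add_self_of_Y_ne (Y_ne_negY_of_a₁_a₃ ha₁ ha₃ (hx.Y_ne_zero ha₁ ha₃ h.1))],
    hx.padicNorm_addX_self ha₁ ha₃ h.1⟩

lemma IsLargeAtTwo.exists_two_pow_nsmul (ha₁ : W.a₁ = 0) (ha₃ : W.a₃ = 0)
    (h : W.Nonsingular x y) (hx : W.IsLargeAtTwo x)
    (k : ℕ) : ∃ (x' y' : ℚ) (h' : W.Nonsingular x' y'),
      2 ^ k • Point.some _ _ h = Point.some _ _ h' ∧
        padicNorm 2 x' = 4 ^ k * padicNorm 2 x := by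
  induction k with
  | zero => exact ⟨x, y, h, by simp, by simp⟩
  | succ k ih =>
    obtain ⟨x', y', h', hk, hx'⟩ := ih
    have hlarge : W.IsLargeAtTwo x' := hx.mono <| by
      rw [hx']
      exact le_mul_of_one_le_left (padicNorm.nonneg _) (one_le_pow₀ (by norm_num))
    obtain ⟨x'', y'', h'', h2, hx''⟩ := hlarge.exists_two_nsmul ha₁ ha₃ h'
    exact ⟨x'', y'', h'', by rw [pow_succ, mul_nsmul, hk, h2],
      by rw [hx'', hx', pow_succ']; ring⟩

lemma IsLargeAtTwo.not_isOfFinAddOrder (ha₁ : W.a₁ = 0) (ha₃ : W.a₃ = 0)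
    (h : W.Nonsingular x y) (hx : W.IsLargeAtTwo x) :
    ¬ IsOfFinAddOrder (Point.some _ _ h) := by
  intro hfin
  choose x' y' h' hsmul hnorm using hx.exists_two_pow_nsmul ha₁ ha₃ h
  refine Set.infinite_range_of_injective (f := fun k : ℕ => 2 ^ k • Point.some _ _ h) ?_
    (hfin.finite_multiples.subset ?_)
  · intro k l hkl
    simp only [hsmul, Point.some.injEq] at hkl
    have := congrArg (padicNorm 2) hkl.1
    rw [hnorm, hnorm, mul_left_inj' hx.padicNorm_pos.ne'] at this
    exact Nat.pow_right_injective (by norm_num : 2 ≤ 4) (by exact_mod_cast this)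
  · rintro _ ⟨k, rfl⟩
    exact ⟨2 ^ k, rfl⟩

end WeierstrassCurve.Affine

open WeierstrassCurve.Affine

lemma curveT_nonsingular {t : ℚ} (hy : t ^ 4 - 1 ≠ 0) :
    (curveT t).Nonsingular (-t ^ 2 + 1) (t ^ 4 - 1) := by
  rw [nonsingular_iff, equation_iff]
  refine ⟨by simp only [curveT]; ring, Or.inr ?_⟩
  simp only [curveT]
  intro h
  exact hy (by linarith)

lemma curveT_addX_self {t : ℚ} (hy : t ^ 4 - 1 ≠ 0) :
    (curveT t).addX (-t ^ 2 + 1) (-t ^ 2 + 1)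
      ((curveT t).slope (-t ^ 2 + 1) (-t ^ 2 + 1) (t ^ 4 - 1) (t ^ 4 - 1)) =
      (t ^ 4 - 6 * t ^ 2 + 1) / 4 := by
  rw [addX_self_of_a₁_a₃ rfl rfl hy]
  simp only [curveT]
  field_simp
  ring

lemma curveT_isLargeAtTwo (t : ℚ) : (curveT t).IsLargeAtTwo ((t ^ 4 - 6 * t ^ 2 + 1) / 4) := by
  have hx : padicNorm 2 ((t ^ 4 - 6 * t ^ 2 + 1) / 4) =
      4 * padicNorm 2 (t ^ 4 - 6 * t ^ 2 + 1) := by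
    rw [show (4 : ℚ) = 2 ^ 2 by norm_num, padicNorm.div, padicNorm.pow, padicNorm_two_two]
    ring
  have ha₂ : padicNorm 2 (curveT t).a₂ = padicNorm 2 t ^ 2 / 2 := by
    rw [curveT, padicNorm.mul, padicNorm_two_two, padicNorm.pow]
    ring
  have ha₄ : padicNorm 2 (curveT t).a₄ = padicNorm 2 t ^ 2 * padicNorm 2 (t ^ 2 - 1) ^ 2 := by
    rw [curveT, show t ^ 6 - 2 * t ^ 4 + t ^ 2 = t ^ 2 * (t ^ 2 - 1) ^ 2 by ring, padicNorm.mul,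
      padicNorm.pow, padicNorm.pow]
  have hn := padicNorm.nonneg (p := 2) t
  rcases lt_trichotomy (padicNorm 2 t) 1 with hlt | heq | hgt
  · obtain ⟨hN, hs⟩ := padicNorm_two_quartic_of_lt_one hlt
    refine isLargeAtTwo_of_a₆_eq_mul rfl ?_ ?_ <;> rw [hx, hN]
    · rw [ha₂]; nlinarith
    · rw [ha₄, hs]; nlinarith
  · have hs := padicNorm_two_sq_sub_one_le heq
    refine isLargeAtTwo_of_a₆_eq_mul rfl ?_ ?_ <;> rw [hx, padicNorm_two_quartic_of_eq_one heq]
    · rw [ha₂, heq]; norm_num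
    · rw [ha₄, heq]; nlinarith [padicNorm.nonneg (p := 2) (t ^ 2 - 1)]
  · obtain ⟨hN, hs⟩ := padicNorm_two_quartic_of_one_lt hgt
    refine isLargeAtTwo_of_a₆_eq_mul rfl ?_ ?_ <;> rw [hx, hN]
    · rw [ha₂]; nlinarith [pow_lt_pow_right₀ hgt (by norm_num : 2 < 4)]
    · rw [ha₄, hs]; nlinarith [pow_lt_pow_right₀ hgt (by norm_num : 6 < 8)]

theorem point_R_on_curveT_infinite_order_general (t : ℚ) (h1 : t ≠ 1) (h2 : t ≠ -1) :
    ∃ h : (curveT t).Nonsingular (-t ^ 2 + 1) (t ^ 4 - 1),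
      ¬ IsOfFinAddOrder (WeierstrassCurve.Affine.Point.some _ _ h) := by
  have hy : t ^ 4 - 1 ≠ 0 := by
    rw [show t ^ 4 - 1 = (t - 1) * (t + 1) * (t ^ 2 + 1) by ring]
    have := sub_ne_zero.2 h1
    have := add_eq_zero_iff_eq_neg.not.2 h2
    positivity
  have hR := curveT_nonsingular hy
  have hyR := Y_ne_negY_of_a₁_a₃ (W := curveT t) (x := -t ^ 2 + 1) rfl rfl hy
  have h2R : (curveT t).IsLargeAtTwo ((curveT t).addX (-t ^ 2 + 1) (-t ^ 2 + 1)
      ((curveT t).slope (-t ^ 2 + 1) (-t ^ 2 + 1) (t ^ 4 - 1) (t ^ 4 - 1))) := by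
    rw [curveT_addX_self hy]
    exact curveT_isLargeAtTwo t
  refine ⟨hR, fun hfin =>
    h2R.not_isOfFinAddOrder rfl rfl (nonsingular_add hR hR fun h => hyR h.2) ?_⟩
  rw [← Point.add_self_of_Y_ne hyR, ← two_nsmul]
  exact hfin.nsmul

/-- For every rational `t ≠ 0, ±1`, the point `R = (-t² + 1, t⁴ - 1)` is a rational point of
infinite order on the elliptic curve `Y² = (X + 2t²)(X² + t⁶ - 2t⁴ + t²)`. -/
theorem point_R_on_curveT_infinite_order (t : ℚ) (h0 : t ≠ 0) (h1 : t ≠ 1) (h2 : t ≠ -1) :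
    ∃ h : (curveT t).Nonsingular (-t ^ 2 + 1) (t ^ 4 - 1),
      ¬ IsOfFinAddOrder (WeierstrassCurve.Affine.Point.some _ _ h) :=
  point_R_on_curveT_infinite_order_general t h1 h2
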